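/- arXiv:1306.0565 — 3 statements merged into one kernel-verified Lean document; each statement's English description precedes it below -/
import Mathlib

section
/- Let v be a smooth function on B_2 ⊂ ℝ², and let h be a smooth function satisfying v·Δh + 2⟨∇v, ∇h⟩ + v·|∇h|² = 0 on B_2. Let F = |∇h|². Then v²·ΔF = 2v²·|Hess h|² + 4⟨∇h, ∇v⟩² − 4v·(Hess v)(∇h, ∇h) − 2v·⟨∇F, ∇v⟩ − 2v²·⟨∇F, ∇h⟩ on B_2. -/
open Complex Real

/-- Directional derivative of `f : ℂ → ℝ` at `z` in direction `w`. -/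
noncomputable def pd (w : ℂ) (f : ℂ → ℝ) (z : ℂ) : ℝ := fderiv ℝ f z w

/-- Laplacian. -/
noncomputable def lap (f : ℂ → ℝ) (z : ℂ) : ℝ :=
  pd 1 (pd 1 f) z + pd Complex.I (pd Complex.I f) z

/-- Inner product of the gradients of `f` and `g` at `z`. -/
noncomputable def gradInner (f g : ℂ → ℝ) (z : ℂ) : ℝ :=
  pd 1 f z * pd 1 g z + pd Complex.I f z * pd Complex.I g z

/-- `|∇f|²` at `z`. -/
noncomputable def gradSq (f : ℂ → ℝ) (z : ℂ) : ℝ := gradInner f f z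

/-- Hessian bilinear form of `f` at `z` evaluated on directions `X, Y`. -/
noncomputable def hess (f : ℂ → ℝ) (X Y : ℂ) (z : ℂ) : ℝ := pd Y (pd X f) z

/-- Sum of squares of the entries of the Hessian matrix of `f` at `z`. -/
noncomputable def hessSq (f : ℂ → ℝ) (z : ℂ) : ℝ :=
  (hess f 1 1 z) ^ 2 + (hess f 1 Complex.I z) ^ 2 +
    (hess f Complex.I 1 z) ^ 2 + (hess f Complex.I Complex.I z) ^ 2

/-- The open disk of radius 2 centered at the origin. -/
def B2 : Set ℂ := Metric.ball 0 2

/-- Harmonic on a set: `C²` and the Laplacian vanishes there. -/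
noncomputable def HarmOn (f : ℂ → ℝ) (s : Set ℂ) : Prop :=
  ContDiffOn ℝ 2 f s ∧ ∀ z ∈ s, lap f z = 0

/-- `v_k(z) = Im (z^k)`. -/
noncomputable def vk (k : ℕ) (z : ℂ) : ℝ := (z ^ k).im

open Filter

private lemma isOpen_B2 : IsOpen B2 := Metric.isOpen_ball

private lemma pd_congr {f g : ℂ → ℝ} {z : ℂ} (w : ℂ) (hfg : f =ᶠ[nhds z] g) :
    pd w f z = pd w g z := by
  unfold pd; rw [hfg.fderiv_eq]

private lemma pd_add {f g : ℂ → ℝ} {z : ℂ} (w : ℂ) (hf : DifferentiableAt ℝ f z)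
    (hg : DifferentiableAt ℝ g z) :
    pd w (fun y => f y + g y) z = pd w f z + pd w g z := by
  unfold pd; rw [fderiv_fun_add hf hg]; simp

private lemma pd_mul {f g : ℂ → ℝ} {z : ℂ} (w : ℂ) (hf : DifferentiableAt ℝ f z)
    (hg : DifferentiableAt ℝ g z) :
    pd w (fun y => f y * g y) z = pd w f z * g z + f z * pd w g z := by
  unfold pd; rw [fderiv_fun_mul hf hg]; simp; ring

private lemma pd_cmul {f : ℂ → ℝ} {z : ℂ} (w : ℂ) (c : ℝ) (hf : DifferentiableAt ℝ f z) :
    pd w (fun y => c * f y) z = c * pd w f z := by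
  unfold pd; rw [fderiv_const_mul hf c]; simp

private lemma contDiffOn_pd {f : ℂ → ℝ} (hf : ContDiffOn ℝ (⊤ : ℕ∞) f B2) (w : ℂ) :
    ContDiffOn ℝ (⊤ : ℕ∞) (pd w f) B2 := by
  have h1 : ContDiffOn ℝ (⊤ : ℕ∞) (fderiv ℝ f) B2 :=
    hf.fderiv_of_isOpen isOpen_B2 (by simp)
  exact h1.clm_apply contDiffOn_const

private lemma diffAt {f : ℂ → ℝ} (hf : ContDiffOn ℝ (⊤ : ℕ∞) f B2) {z : ℂ} (hz : z ∈ B2) :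
    DifferentiableAt ℝ f z :=
  (hf.contDiffAt (isOpen_B2.mem_nhds hz)).differentiableAt (by simp)

private lemma pd_comm {f : ℂ → ℝ} {z : ℂ} (hf : ContDiffAt ℝ 2 f z) (a b : ℂ) :
    pd a (pd b f) z = pd b (pd a f) z := by
  have hd : DifferentiableAt ℝ (fderiv ℝ f) z :=
    (hf.fderiv_right (m := 1) (by norm_num)).differentiableAt one_ne_zero
  have key : ∀ w : ℂ, fderiv ℝ (fun y => fderiv ℝ f y w) z
      = (fderiv ℝ (fderiv ℝ f) z).flip w := by
    intro w
    rw [fderiv_clm_apply hd (differentiableAt_const w)]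
    simp
  have hsymm := hf.isSymmSndFDerivAt (by simp)
  show fderiv ℝ (pd b f) z a = fderiv ℝ (pd a f) z b
  unfold pd
  rw [key b, key a]
  simpa using hsymm a b

theorem stmt1 (v h : ℂ → ℝ)
    (hv : ContDiffOn ℝ (⊤ : ℕ∞) v B2) (hh : ContDiffOn ℝ (⊤ : ℕ∞) h B2)
    (heq : ∀ z ∈ B2,
      v z * lap h z + 2 * gradInner v h z + v z * gradSq h z = 0) :
    ∀ z ∈ B2,
      (v z) ^ 2 * lap (gradSq h) z =
        2 * (v z) ^ 2 * hessSq h z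
          + 4 * (gradInner h v z) ^ 2
          - 4 * v z * (pd 1 h z * (hess v 1 1 z * pd 1 h z + hess v 1 Complex.I z * pd Complex.I h z)
              + pd Complex.I h z * (hess v Complex.I 1 z * pd 1 h z + hess v Complex.I Complex.I z * pd Complex.I h z))
          - 2 * v z * gradInner (gradSq h) v z
          - 2 * (v z) ^ 2 * gradInner (gradSq h) h z := by
  intro z hz
  have memz := isOpen_B2.mem_nhds hz
  have Sh1 : ContDiffOn ℝ (⊤ : ℕ∞) (pd 1 h) B2 := contDiffOn_pd hh 1
  have Sh2 : ContDiffOn ℝ (⊤ : ℕ∞) (pd Complex.I h) B2 := contDiffOn_pd hh Complex.I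
  have Sv1 : ContDiffOn ℝ (⊤ : ℕ∞) (pd 1 v) B2 := contDiffOn_pd hv 1
  have Sv2 : ContDiffOn ℝ (⊤ : ℕ∞) (pd Complex.I v) B2 := contDiffOn_pd hv Complex.I
  have Sh11 := contDiffOn_pd Sh1 1
  have Sh12 := contDiffOn_pd Sh1 Complex.I
  have Sh21 := contDiffOn_pd Sh2 1
  have Sh22 := contDiffOn_pd Sh2 Complex.I
  have C2 : ∀ {f : ℂ → ℝ}, ContDiffOn ℝ (⊤ : ℕ∞) f B2 → ∀ {y : ℂ}, y ∈ B2 → ContDiffAt ℝ 2 f y := by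
    intro f hf y hy
    exact (hf.contDiffAt (isOpen_B2.mem_nhds hy)).of_le (WithTop.coe_le_coe.mpr le_top)
  -- first derivative of gradSq h, everywhere on B2
  have EF : ∀ (w : ℂ), ∀ y ∈ B2, pd w (gradSq h) y
      = 2 * (pd 1 h y * pd w (pd 1 h) y + pd Complex.I h y * pd w (pd Complex.I h) y) := by
    intro w y hy
    have d1 := diffAt Sh1 hy
    have d2 := diffAt Sh2 hy
    show pd w (fun x => pd 1 h x * pd 1 h x + pd Complex.I h x * pd Complex.I h x) y = _
    rw [pd_add w (d1.fun_mul d1) (d2.fun_mul d2), pd_mul w d1 d1, pd_mul w d2 d2]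
    ring
  -- derivative of lap h at z
  have ELap : ∀ w : ℂ, pd w (lap h) z
      = pd w (pd 1 (pd 1 h)) z + pd w (pd Complex.I (pd Complex.I h)) z := by
    intro w
    show pd w (fun y => pd 1 (pd 1 h) y + pd Complex.I (pd Complex.I h) y) z = _
    exact pd_add w (diffAt Sh11 hz) (diffAt Sh22 hz)
  -- derivative of gradInner v h at z
  have EG : ∀ w : ℂ, pd w (gradInner v h) z
      = pd w (pd 1 v) z * pd 1 h z + pd 1 v z * pd w (pd 1 h) z
        + pd w (pd Complex.I v) z * pd Complex.I h z + pd Complex.I v z * pd w (pd Complex.I h) z := by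
    intro w
    show pd w (fun y => pd 1 v y * pd 1 h y + pd Complex.I v y * pd Complex.I h y) z = _
    rw [pd_add w ((diffAt Sv1 hz).fun_mul (diffAt Sh1 hz)) ((diffAt Sv2 hz).fun_mul (diffAt Sh2 hz)),
      pd_mul w (diffAt Sv1 hz) (diffAt Sh1 hz), pd_mul w (diffAt Sv2 hz) (diffAt Sh2 hz)]
    ring
  -- second derivative of gradSq h at z
  have EFF : ∀ w : ℂ, pd w (pd w (gradSq h)) z
      = 2 * (pd w (pd 1 h) z * pd w (pd 1 h) z + pd 1 h z * pd w (pd w (pd 1 h)) z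
           + pd w (pd Complex.I h) z * pd w (pd Complex.I h) z
           + pd Complex.I h z * pd w (pd w (pd Complex.I h)) z) := by
    intro w
    have hev : pd w (gradSq h) =ᶠ[nhds z]
        (fun y => 2 * (pd 1 h y * pd w (pd 1 h) y + pd Complex.I h y * pd w (pd Complex.I h) y)) := by
      filter_upwards [memz] with y hy using EF w y hy
    rw [pd_congr w hev]
    have d1 := diffAt Sh1 hz
    have d2 := diffAt Sh2 hz
    have d1w := diffAt (contDiffOn_pd Sh1 w) hz
    have d2w := diffAt (contDiffOn_pd Sh2 w) hz
    rw [pd_cmul w 2 ((d1.fun_mul d1w).fun_add (d2.fun_mul d2w)),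
      pd_add w (d1.fun_mul d1w) (d2.fun_mul d2w), pd_mul w d1 d1w, pd_mul w d2 d2w]
    ring
  -- differentiated PDE
  have Ew : ∀ w : ℂ, pd w v z * lap h z + v z * pd w (lap h) z + 2 * pd w (gradInner v h) z
      + pd w v z * gradSq h z + v z * pd w (gradSq h) z = 0 := by
    intro w
    have dv := diffAt hv hz
    have dlap : DifferentiableAt ℝ (lap h) z := (diffAt Sh11 hz).add (diffAt Sh22 hz)
    have dgi : DifferentiableAt ℝ (gradInner v h) z :=
      ((diffAt Sv1 hz).mul (diffAt Sh1 hz)).add ((diffAt Sv2 hz).mul (diffAt Sh2 hz))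
    have dgs : DifferentiableAt ℝ (gradSq h) z :=
      ((diffAt Sh1 hz).mul (diffAt Sh1 hz)).add ((diffAt Sh2 hz).mul (diffAt Sh2 hz))
    have e0 : pd w (fun y => v y * lap h y + 2 * gradInner v h y + v y * gradSq h y) z = 0 := by
      have hev : (fun y => v y * lap h y + 2 * gradInner v h y + v y * gradSq h y)
          =ᶠ[nhds z] (fun _ => (0 : ℝ)) := by
        filter_upwards [memz] with y hy using heq y hy
      rw [pd_congr w hev]
      simp [pd]
    rw [pd_add w ((dv.fun_mul dlap).fun_add (dgi.const_mul 2)) (dv.fun_mul dgs),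
      pd_add w (dv.fun_mul dlap) (dgi.const_mul 2),
      pd_mul w dv dlap, pd_cmul w 2 dgi, pd_mul w dv dgs] at e0
    linarith [e0]
  -- fully expanded differentiated PDE
  have lapz : lap h z = pd 1 (pd 1 h) z + pd Complex.I (pd Complex.I h) z := rfl
  have gsz : gradSq h z = pd 1 h z * pd 1 h z + pd Complex.I h z * pd Complex.I h z := rfl
  have giz : gradInner v h z = pd 1 v z * pd 1 h z + pd Complex.I v z * pd Complex.I h z := rfl
  have E1 := Ew 1
  have EI := Ew Complex.I
  rw [lapz, gsz, ELap 1, EG 1, EF 1 z hz] at E1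
  rw [lapz, gsz, ELap Complex.I, EG Complex.I, EF Complex.I z hz] at EI
  have e00 := heq z hz
  rw [lapz, gsz, giz] at e00
  -- symmetry facts
  have symh : pd Complex.I (pd 1 h) z = pd 1 (pd Complex.I h) z := pd_comm (C2 hh hz) Complex.I 1
  have symh_all : ∀ y ∈ B2, pd Complex.I (pd 1 h) y = pd 1 (pd Complex.I h) y :=
    fun y hy => pd_comm (C2 hh hy) Complex.I 1
  have e3a : pd Complex.I (pd Complex.I (pd 1 h)) z = pd 1 (pd Complex.I (pd Complex.I h)) z := by
    have h1 : pd Complex.I (pd Complex.I (pd 1 h)) z = pd Complex.I (pd 1 (pd Complex.I h)) z := by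
      apply pd_congr
      filter_upwards [memz] with y hy using symh_all y hy
    rw [h1, pd_comm (C2 Sh2 hz) Complex.I 1]
  have e3b : pd Complex.I (pd 1 (pd 1 h)) z = pd 1 (pd 1 (pd Complex.I h)) z := by
    have h1 : pd Complex.I (pd 1 (pd 1 h)) z = pd 1 (pd Complex.I (pd 1 h)) z :=
      pd_comm (C2 Sh1 hz) Complex.I 1
    rw [h1]
    apply pd_congr
    filter_upwards [memz] with y hy using symh_all y hy
  -- unfold the goal and finish
  simp only [lap, hessSq, hess, gradInner]
  rw [EFF 1, EFF Complex.I, EF 1 z hz, EF Complex.I z hz]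
  linear_combination (2 * v z * pd 1 h z) * E1 + (2 * v z * pd Complex.I h z) * EI
    + (-2 * (pd 1 h z * pd 1 v z + pd Complex.I h z * pd Complex.I v z)) * e00
    + (2 * (v z)^2 * pd 1 h z) * e3a + (-2 * (v z)^2 * pd Complex.I h z) * e3b
    + (4 * v z * pd Complex.I v z * pd 1 h z - 4 * v z * pd 1 v z * pd Complex.I h z) * symh
end

section
/- For every positive integer k and every vector field X on B_2 ⊂ ℝ², setting v_k(z) = Im(z^k), the quantity Q_k(X) := (X v_k)² − v_k·(Hess v_k)(X, X) is nonnegative, and moreover Q_k(X) ≥ (1/k)·(X v_k)². -/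
open Complex Real

/-!
Fix `z` and `x = X z`, and put `p = z ^ k`, `q = z ^ (k - 1) * x`, `w = z ^ (k - 2) * x ^ 2`, so that
`X v_k = k Im q`, `v_k = Im p`, `Hess v_k (x, x) = k (k - 1) Im w` and `q ^ 2 = p w`.
From `|p| |w| = |q| ^ 2` and `Re (p w̄) ≤ |p| |w|` one gets `Im p Im w ≤ (Im q) ^ 2`, hence
`Q_k ≥ k² (Im q)² - k (k - 1) (Im q)² = k (Im q)² = (X v_k)² / k`.
-/

theorem fderiv_im_apply_of_hasDerivAt {f : ℂ → ℂ} {f' z : ℂ} (hf : HasDerivAt f f' z) (w : ℂ) :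
    fderiv ℝ (fun y => (f y).im) z w = (f' * w).im := by
  have h : HasFDerivAt (fun y => (f y).im) _ z :=
    Complex.imCLM.hasFDerivAt.comp z (hf.hasFDerivAt.restrictScalars ℝ)
  rw [h.fderiv]
  simp [mul_comm]

theorem hess_im_of_hasDerivAt {f f' : ℂ → ℂ} {f'' z : ℂ} (hf : ∀ y, HasDerivAt f (f' y) y)
    (hf' : HasDerivAt f' f'' z) (x : ℂ) :
    hess (fun y => (f y).im) x x z = (f'' * x * x).im := by
  have hpd : pd x (fun y => (f y).im) = fun y => (f' y * x).im :=
    funext fun y => fderiv_im_apply_of_hasDerivAt (hf y) x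
  rw [hess, hpd, pd, fderiv_im_apply_of_hasDerivAt (hf'.mul_const x)]

theorem im_mul_im_le_mul_sq_im {p w q : ℂ} {c : ℝ} (hc : 0 ≤ c) (h : c * q ^ 2 = p * w) :
    p.im * w.im ≤ c * q.im ^ 2 := by
  have hnorm : c * ‖q‖ ^ 2 = ‖p‖ * ‖w‖ := by
    rw [← norm_mul, ← h, norm_mul, norm_pow, Complex.norm_real, Real.norm_of_nonneg hc]
  have hre : c * (q.re ^ 2 - q.im ^ 2) = p.re * w.re - p.im * w.im := by
    have := congrArg Complex.re h
    simp only [Complex.mul_re, Complex.ofReal_re, Complex.ofReal_im, sq] at this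
    linarith
  have hconj : p.re * w.re + p.im * w.im ≤ ‖p‖ * ‖w‖ := by
    have := Complex.re_le_norm (p * (starRingEnd ℂ) w)
    simpa [Complex.mul_re, Complex.norm_conj] using this
  rw [Complex.sq_norm, Complex.normSq_apply] at hnorm
  nlinarith

theorem fderiv_vk_apply (k : ℕ) (z w : ℂ) :
    fderiv ℝ (vk k) z w = (k * z ^ (k - 1) * w).im :=
  fderiv_im_apply_of_hasDerivAt (hasDerivAt_pow k z) w

theorem hess_vk (k : ℕ) (x z : ℂ) :
    hess (vk k) x x z = (k * ((k - 1 : ℕ) * z ^ (k - 1 - 1)) * x * x).im :=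
  hess_im_of_hasDerivAt (hasDerivAt_pow k) ((hasDerivAt_pow (k - 1) z).const_mul _) x

theorem one_div_mul_sq_le_sq_sub_mul {n a P W : ℝ} (hn : 0 ≤ n) (h : P * W ≤ n * a ^ 2) :
    1 / (n + 1) * ((n + 1) * a) ^ 2 ≤ ((n + 1) * a) ^ 2 - P * ((n + 1) * W) := by
  have hn1 : 1 / (n + 1) * ((n + 1) * a) ^ 2 = (n + 1) * a ^ 2 := by field_simp
  rw [hn1]
  nlinarith

theorem stmt2 (k : ℕ) (hk : 1 ≤ k) (X : ℂ → ℂ) :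
    ∀ z ∈ B2,
      0 ≤ (fderiv ℝ (vk k) z (X z)) ^ 2 - vk k z * hess (vk k) (X z) (X z) z ∧
      (1 / (k : ℝ)) * (fderiv ℝ (vk k) z (X z)) ^ 2 ≤
        (fderiv ℝ (vk k) z (X z)) ^ 2 - vk k z * hess (vk k) (X z) (X z) z := by
  intro z _
  obtain ⟨m, rfl⟩ := Nat.exists_eq_add_of_le' hk
  set x := X z
  have hD : fderiv ℝ (vk (m + 1)) z x = (m + 1) * (z ^ m * x).im := by
    rw [fderiv_vk_apply]; push_cast; simp [mul_assoc]
  have hH : hess (vk (m + 1)) x x z = (m + 1) * (m * z ^ (m - 1) * x * x).im := by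
    rw [hess_vk]; push_cast; simp [mul_assoc]
  have hkey : vk (m + 1) z * (m * z ^ (m - 1) * x * x).im ≤ m * (z ^ m * x).im ^ 2 := by
    refine im_mul_im_le_mul_sq_im m.cast_nonneg ?_
    -- for `m = 0` the factor `m` absorbs the truncated exponent `m - 1`
    cases m with
    | zero => simp
    | succ n => push_cast; ring
  have hQ := one_div_mul_sq_le_sq_sub_mul m.cast_nonneg hkey
  push_cast
  rw [hD, hH]
  exact ⟨(by positivity : (0 : ℝ) ≤ _).trans hQ, hQ⟩
end

section
/- Let k ≥ 1 and v_k(z) = Im(z^k). Suppose f, g are smooth functions on B_2 with ⟨∇f, ∇v_k⟩ = g·v_k on B_2. If p ∈ B_2 is a local maximum point of f, then g(p) ≤ 0. -/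
open Complex Real

section Aux
open Filter

lemma second_test {φ : ℝ → ℝ} {m : ℝ}
    (hmax : IsLocalMax φ 0)
    (hdiff : ∀ᶠ t in nhds (0:ℝ), DifferentiableAt ℝ φ t)
    (h2 : HasDerivAt (deriv φ) m 0) : m ≤ 0 := by
  by_contra hm
  push_neg at hm
  have h0 : deriv φ 0 = 0 := hmax.deriv_eq_zero
  have hslope : Tendsto (fun t => deriv φ t / t) (nhdsWithin 0 {(0:ℝ)}ᶜ) (nhds m) := by
    have h := hasDerivAt_iff_tendsto_slope.1 h2
    simpa [slope_fun_def, h0, div_eq_inv_mul] using h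
  have hpos : ∀ᶠ t in nhdsWithin (0:ℝ) (Set.Ioi 0), 0 < deriv φ t := by
    have h1 : ∀ᶠ t in nhdsWithin (0:ℝ) {(0:ℝ)}ᶜ, 0 < deriv φ t / t :=
      hslope.eventually (eventually_gt_nhds hm)
    have h1' : ∀ᶠ t in nhdsWithin (0:ℝ) (Set.Ioi 0), 0 < deriv φ t / t :=
      h1.filter_mono (nhdsWithin_mono _ (fun t ht => ne_of_gt ht))
    filter_upwards [h1', self_mem_nhdsWithin] with t h ht
    have := mul_pos h (show (0:ℝ) < t from ht)
    calc (0:ℝ) < deriv φ t / t * t := this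
    _ = deriv φ t := div_mul_cancel₀ _ (ne_of_gt ht)
  have hall : ∀ᶠ t in nhdsWithin (0:ℝ) (Set.Ioi 0),
      0 < deriv φ t ∧ DifferentiableAt ℝ φ t ∧ φ t ≤ φ 0 :=
    hpos.and ((hdiff.and hmax).filter_mono nhdsWithin_le_nhds)
  obtain ⟨u, hu, hsub⟩ := mem_nhdsGT_iff_exists_Ioo_subset.1 hall
  set t0 := u / 2 with ht0
  have ht0mem : t0 ∈ Set.Ioo (0:ℝ) u :=
    ⟨by simp [ht0]; linarith [hu.out], by simp [ht0]; linarith [hu.out]⟩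
  have hdiff0 : DifferentiableAt ℝ φ 0 := hdiff.self_of_nhds
  have hcont : ContinuousOn φ (Set.Icc 0 t0) := by
    intro x hx
    rcases eq_or_lt_of_le hx.1 with h | h
    · exact (h ▸ hdiff0).continuousAt.continuousWithinAt
    · exact ((hsub ⟨h, lt_of_le_of_lt hx.2 ht0mem.2⟩).2.1).continuousAt.continuousWithinAt
  have hmono : StrictMonoOn φ (Set.Icc 0 t0) := by
    apply strictMonoOn_of_deriv_pos (convex_Icc 0 t0) hcont
    intro x hx
    rw [interior_Icc] at hx
    exact (hsub ⟨hx.1, lt_trans hx.2 ht0mem.2⟩).1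
  have hlt : φ 0 < φ t0 :=
    hmono (Set.left_mem_Icc.2 (le_of_lt ht0mem.1)) ⟨le_of_lt ht0mem.1, le_refl _⟩ ht0mem.1
  have hle : φ t0 ≤ φ 0 := (hsub ht0mem).2.2
  linarith

lemma vk_hasFDerivAt (n : ℕ) (z : ℂ) :
    HasFDerivAt (vk (n+1))
      (Complex.imCLM.comp
        ((((1 : ℂ→L[ℂ]ℂ).smulRight (((n:ℂ)+1) * z^n))).restrictScalars ℝ)) z := by
  have h1 : HasDerivAt (fun z : ℂ => z^(n+1)) (((n:ℂ)+1) * z^n) z := by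
    simpa using hasDerivAt_pow (n+1) z
  have h2 := (h1.hasFDerivAt).restrictScalars ℝ
  exact Complex.imCLM.hasFDerivAt.comp z h2

lemma vk_fderiv (n : ℕ) (z v : ℂ) :
    fderiv ℝ (vk (n+1)) z v = ((((n:ℂ)+1) * z^n) * v).im := by
  rw [(vk_hasFDerivAt n z).fderiv]
  simp [mul_comm]

lemma vk_diff (n : ℕ) (z : ℂ) : DifferentiableAt ℝ (vk (n+1)) z :=
  (vk_hasFDerivAt n z).differentiableAt

lemma gradInner_eq (f : ℂ → ℝ) (n : ℕ) (z : ℂ) :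
    gradInner f (vk (n+1)) z
      = fderiv ℝ f z (Complex.I * (starRingEnd ℂ) ((((n:ℂ)+1) * z^n))) := by
  have key : Complex.I * (starRingEnd ℂ) ((((n:ℂ)+1) * z^n))
      = ((((n:ℂ)+1) * z^n).im : ℝ) • (1:ℂ) + ((((n:ℂ)+1) * z^n).re : ℝ) • Complex.I := by
    set c := (((n:ℂ)+1) * z^n)
    apply Complex.ext <;> simp [mul_comm]
  rw [key, map_add, map_smul, map_smul]
  unfold gradInner pd
  rw [vk_fderiv, vk_fderiv]
  simp [mul_comm]

lemma line_hasDerivAt (p w : ℂ) (t : ℝ) :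
    HasDerivAt (fun t : ℝ => p + t • w) w t := by
  simpa using ((hasDerivAt_id t).smul_const w).const_add p

lemma deriv_along (F : ℂ → (ℂ →L[ℝ] ℝ)) (p w v : ℂ) (hF : DifferentiableAt ℝ F p) :
    HasDerivAt (fun t : ℝ => F (p + t • w) v) (fderiv ℝ F p w v) 0 := by
  have h1 : HasFDerivAt F (fderiv ℝ F p) p := hF.hasFDerivAt
  have h2 : HasDerivAt (fun t : ℝ => F (p + t • w)) (fderiv ℝ F p w) 0 := by
    exact HasFDerivAt.comp_hasDerivAt (l := F) (f := fun t : ℝ => p + t • w) 0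
      (by simpa using h1) (line_hasDerivAt p w 0)
  exact HasFDerivAt.comp_hasDerivAt (l := fun T : ℂ →L[ℝ] ℝ => T v)
    (l' := ((ContinuousLinearMap.apply ℝ ℝ v : (ℂ →L[ℝ] ℝ) →L[ℝ] ℝ))) 0
    ((ContinuousLinearMap.apply ℝ ℝ v).hasFDerivAt) h2

lemma deriv_along' (g : ℂ → ℝ) (p w : ℂ) (hG : DifferentiableAt ℝ g p) :
    HasDerivAt (fun t : ℝ => g (p + t • w)) (fderiv ℝ g p w) 0 := by
  exact HasFDerivAt.comp_hasDerivAt 0 (by simpa using hG.hasFDerivAt) (line_hasDerivAt p w 0)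

lemma hess_nonpos {f : ℂ → ℝ} {p : ℂ} (hf : ContDiffOn ℝ (⊤ : ℕ∞) f B2)
    (hp : p ∈ B2) (hmax : IsLocalMax f p) (w : ℂ) :
    fderiv ℝ (fderiv ℝ f) p w w ≤ 0 := by
  have hopen : IsOpen B2 := Metric.isOpen_ball
  have hfd : ∀ q ∈ B2, DifferentiableAt ℝ f q := fun q hq =>
    (hf.differentiableOn (by simp)).differentiableAt (hopen.mem_nhds hq)
  have hFd : DifferentiableAt ℝ (fderiv ℝ f) p := by
    have h1 : ContDiffAt ℝ (⊤ : ℕ∞) f p := hf.contDiffAt (hopen.mem_nhds hp)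
    exact (h1.fderiv_right (m := 1) (WithTop.coe_le_coe.2 (le_top : ((1 + 1 : ℕ) : ℕ∞) ≤ ⊤))).differentiableAt (by simp)
  set φ := fun t : ℝ => f (p + t • w) with hφ
  have hγc : Continuous (fun t : ℝ => p + t • w) := by continuity
  have hmem : ∀ᶠ t in nhds (0:ℝ), p + t • w ∈ B2 := by
    have : (fun t : ℝ => p + t • w) 0 ∈ B2 := by simpa using hp
    exact hγc.continuousAt.eventually_mem (hopen.mem_nhds this)
  have hmax' : IsLocalMax φ 0 := by
    have htend : Tendsto (fun t : ℝ => p + t • w) (nhds 0) (nhds p) := by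
      simpa using hγc.tendsto (0:ℝ)
    exact IsMaxFilter.comp_tendsto (by rw [zero_smul, add_zero]; exact hmax) htend
  have hdiffφ : ∀ᶠ t in nhds (0:ℝ), DifferentiableAt ℝ φ t := by
    filter_upwards [hmem] with t ht
    exact (hfd _ ht).comp t ((line_hasDerivAt p w t).differentiableAt)
  have hderivφ : ∀ᶠ t in nhds (0:ℝ), deriv φ t = fderiv ℝ f (p + t • w) w := by
    filter_upwards [hmem] with t ht
    have : HasDerivAt φ (fderiv ℝ f (p + t • w) w) t :=
      HasFDerivAt.comp_hasDerivAt t (hfd _ ht).hasFDerivAt (line_hasDerivAt p w t)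
    exact this.deriv
  have hχ : HasDerivAt (fun t : ℝ => fderiv ℝ f (p + t • w) w) (fderiv ℝ (fderiv ℝ f) p w w) 0 :=
    deriv_along (fderiv ℝ f) p w w hFd
  have h2 : HasDerivAt (deriv φ) (fderiv ℝ (fderiv ℝ f) p w w) 0 := by
    apply hχ.congr_of_eventuallyEq
    filter_upwards [hderivφ] with t ht using ht
  exact second_test hmax' hdiffφ h2

end Aux

set_option maxHeartbeats 2000000 in
theorem stmt11 (k : ℕ) (hk : 1 ≤ k) (f g : ℂ → ℝ)
    (hf : ContDiffOn ℝ (⊤ : ℕ∞) f B2) (hg : ContDiffOn ℝ (⊤ : ℕ∞) g B2)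
    (heq : ∀ z ∈ B2, gradInner f (vk k) z = g z * vk k z)
    (p : ℂ) (hp : p ∈ B2) (hmax : IsLocalMax f p) :
    g p ≤ 0 := by
  obtain ⟨n, rfl⟩ : ∃ n, k = n + 1 := ⟨k - 1, (Nat.succ_pred_eq_of_pos hk).symm⟩
  have hopen : IsOpen B2 := Metric.isOpen_ball
  have hfd : ∀ q ∈ B2, DifferentiableAt ℝ f q := fun q hq =>
    (hf.differentiableOn (by simp)).differentiableAt (hopen.mem_nhds hq)
  have hgd : DifferentiableAt ℝ g p :=
    (hg.differentiableOn (by simp)).differentiableAt (hopen.mem_nhds hp)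
  have hFd : DifferentiableAt ℝ (fderiv ℝ f) p := by
    have h1 : ContDiffAt ℝ (⊤ : ℕ∞) f p := hf.contDiffAt (hopen.mem_nhds hp)
    exact (h1.fderiv_right (m := 1) (WithTop.coe_le_coe.2 (le_top : ((1 + 1 : ℕ) : ℕ∞) ≤ ⊤))).differentiableAt (by simp)
  have key : ∀ z ∈ B2,
      fderiv ℝ f z (Complex.I * (starRingEnd ℂ) ((((n:ℂ)+1) * z^n))) = g z * vk (n+1) z :=
    fun z hz => (gradInner_eq f n z).symm.trans (heq z hz)
  by_cases hvkp : vk (n+1) p ≠ 0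
  · -- gradient vanishes, so g p * vk p = 0 with vk p ≠ 0
    have hD0 : fderiv ℝ f p = 0 := hmax.fderiv_eq_zero
    have := key p hp
    rw [hD0] at this
    simp at this
    rcases this with h | h
    · exact le_of_eq h
    · exact absurd h hvkp
  push_neg at hvkp
  by_cases hp0 : p = 0
  · -- Case C : p = 0
    subst hp0
    set θ : ℝ := π / (2 * ((n:ℝ)+1)) with hθdef
    have hn1pos : (0:ℝ) < (n:ℝ) + 1 := by positivity
    have hθeq : ((n:ℝ)+1) * θ = π/2 := by
      field_simp [hθdef]
      rw [show ((n:ℝ) + 1) * θ * 2 = θ * (2 * ((n:ℝ)+1)) by ring, hθdef]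
      exact div_mul_cancel₀ _ (by positivity)
    set ω : ℂ := Complex.exp (θ * Complex.I) with hωdef
    have hexpI : Complex.exp (((π/2 : ℝ) : ℂ) * Complex.I) = Complex.I := by
      rw [Complex.exp_mul_I, ← Complex.ofReal_cos, ← Complex.ofReal_sin,
        Real.cos_pi_div_two, Real.sin_pi_div_two]
      simp
    have hcast : ((n:ℂ)+1) * (θ:ℂ) = ((((n:ℝ)+1) * θ : ℝ) : ℂ) := by push_cast; ring
    have hωpow : ω ^ (n+1) = Complex.I := by
      rw [hωdef, ← Complex.exp_nat_mul]
      rw [show ((n+1 : ℕ) : ℂ) * ((θ:ℂ) * Complex.I) = (((n:ℂ)+1) * (θ:ℂ)) * Complex.I by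
        push_cast; ring]
      rw [hcast, hθeq]
      exact hexpI
    have hconj : Complex.I * ((starRingEnd ℂ) ω) ^ n = ω := by
      have h1 : (starRingEnd ℂ) ω = Complex.exp (-(θ:ℂ) * Complex.I) := by
        rw [hωdef, ← Complex.exp_conj]
        congr 1
        simp [Complex.conj_ofReal]
      have h2 : ((starRingEnd ℂ) ω) ^ n = Complex.exp ((-(n:ℂ) * (θ:ℂ)) * Complex.I) := by
        rw [h1, ← Complex.exp_nat_mul]
        congr 1
        ring
      have h3 : (((π/2 : ℝ)) : ℂ) = ((n:ℂ)+1) * (θ:ℂ) := by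
        rw [hcast]
        exact_mod_cast congrArg Complex.ofReal hθeq.symm
      have h4 : Complex.I * Complex.exp ((-(n:ℂ) * (θ:ℂ)) * Complex.I)
          = Complex.exp (((π/2 : ℝ) : ℂ) * Complex.I) * Complex.exp ((-(n:ℂ) * (θ:ℂ)) * Complex.I) := by
        rw [hexpI]
      rw [h2, h4, ← Complex.exp_add, hωdef]
      congr 1
      rw [h3]
      ring
    have halg : ∀ t : ℝ, Complex.I * (starRingEnd ℂ) ((((n:ℂ)+1) * (t • ω)^n))
        = ((((n:ℝ)+1) * t^n : ℝ)) • ω := by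
      intro t
      have hstep : Complex.I * (starRingEnd ℂ) ((((n:ℂ)+1) * (t • ω)^n))
          = ((t:ℂ))^n * (((n:ℂ)+1) * (Complex.I * ((starRingEnd ℂ) ω)^n)) := by
        rw [Complex.real_smul, mul_pow]
        simp only [map_mul, map_pow, Complex.conj_ofReal]
        have hconjn1 : (starRingEnd ℂ) ((n:ℂ)+1) = ((n:ℂ)+1) := by simp
        rw [hconjn1]
        ring
      rw [hstep, hconj, Complex.real_smul]
      push_cast
      ring
    have hvkω : ∀ t : ℝ, vk (n+1) (t • ω) = t^(n+1) := by
      intro t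
      unfold vk
      rw [Complex.real_smul, mul_pow, hωpow]
      simp [← Complex.ofReal_pow]
    have hγc : Continuous (fun t : ℝ => t • ω) := by continuity
    have hmem : ∀ᶠ t in nhds (0:ℝ), t • ω ∈ B2 := by
      have h0 : (fun t : ℝ => t • ω) 0 ∈ B2 := by simpa using hp
      exact hγc.continuousAt.eventually_mem (hopen.mem_nhds h0)
    have hD0 : fderiv ℝ f 0 = 0 := hmax.fderiv_eq_zero
    set F := fderiv ℝ f with hFdef
    have hev : (fun t : ℝ => ((n:ℝ)+1) * (F (t • ω) ω))
        =ᶠ[nhds (0:ℝ)] (fun t : ℝ => t * g (t • ω)) := by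
      filter_upwards [hmem] with t ht
      rcases eq_or_ne t 0 with rfl | htne
      · simp only [zero_smul, hD0, ContinuousLinearMap.zero_apply, mul_zero, zero_mul]
      · have h1 := key (t • ω) ht
        rw [halg t, hvkω t, map_smul] at h1
        have h1' : (((n:ℝ)+1) * t^n) * (F (t • ω) ω) = g (t • ω) * t^(n+1) := h1
        have h2 : t^n * (((n:ℝ)+1) * (F (t • ω) ω)) = t^n * (t * g (t • ω)) := by
          rw [pow_succ] at h1'
          ring_nf
          ring_nf at h1'
          linarith
        exact mul_left_cancel₀ (pow_ne_zero n htne) h2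
    have hL : HasDerivAt (fun t : ℝ => ((n:ℝ)+1) * (F (t • ω) ω))
        (((n:ℝ)+1) * (fderiv ℝ F 0 ω ω)) 0 := by
      have := (deriv_along F 0 ω ω hFd).const_mul (((n:ℝ)+1))
      simpa using this
    have hR : HasDerivAt (fun t : ℝ => t * g (t • ω)) (g 0) 0 := by
      have h1 : HasDerivAt (fun t : ℝ => t) 1 0 := hasDerivAt_id 0
      have h2 := deriv_along' g 0 ω hgd
      have := h1.mul h2
      simpa [Pi.mul_def] using this
    have huniq : g 0 = ((n:ℝ)+1) * (fderiv ℝ F 0 ω ω) := by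
      have hL' : HasDerivAt (fun t : ℝ => t * g (t • ω))
          (((n:ℝ)+1) * (fderiv ℝ F 0 ω ω)) 0 := hL.congr_of_eventuallyEq hev.symm
      exact (hR.unique hL')
    rw [huniq]
    exact mul_nonpos_of_nonneg_of_nonpos (by positivity) (hess_nonpos hf hp hmax ω)
  · -- Case B : p ≠ 0, vk p = 0
    set c : ℂ := ((n:ℂ)+1) * p^n with hcdef
    have hcne : c ≠ 0 := by
      apply mul_ne_zero
      · have h5 : ((n+1 : ℕ) : ℂ) ≠ 0 := Nat.cast_ne_zero.mpr (Nat.succ_ne_zero n)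
        simpa using h5
      · exact pow_ne_zero n hp0
    set w : ℂ := Complex.I * (starRingEnd ℂ) c with hwdef
    set Gv : ℂ → ℂ := fun z => Complex.I * (starRingEnd ℂ) ((((n:ℂ)+1) * z^n)) with hGvdef
    have hGvp : Gv p = w := rfl
    have hGvdiff : DifferentiableAt ℝ Gv p := by
      have h1 : DifferentiableAt ℝ (fun z : ℂ => (((n:ℂ)+1) * z^n)) p :=
        (((differentiable_pow (𝕜 := ℂ) (𝔸 := ℂ) n).restrictScalars ℝ) p).const_mul _
      have h2 : DifferentiableAt ℝ (fun z : ℂ => (starRingEnd ℂ) ((((n:ℂ)+1) * z^n))) p := by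
        simp only [starRingEnd_apply]
        exact h1.star
      exact h2.const_mul _
    set F := fderiv ℝ f with hFdef
    have hγc : Continuous (fun t : ℝ => p + t • w) := by continuity
    have hmem : ∀ᶠ t in nhds (0:ℝ), p + t • w ∈ B2 := by
      have h0 : (fun t : ℝ => p + t • w) 0 ∈ B2 := by simpa using hp
      exact hγc.continuousAt.eventually_mem (hopen.mem_nhds h0)
    have hev : (fun t : ℝ => F (p + t • w) (Gv (p + t • w)))
        =ᶠ[nhds (0:ℝ)] (fun t : ℝ => g (p + t • w) * vk (n+1) (p + t • w)) := by
      filter_upwards [hmem] with t ht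
      exact key (p + t • w) ht
    have hD0 : F p = 0 := hmax.fderiv_eq_zero
    have hL : HasDerivAt (fun t : ℝ => F (p + t • w) (Gv (p + t • w)))
        (fderiv ℝ F p w w) 0 := by
      have hclm : HasFDerivAt (fun z => F z (Gv z))
          ((F p).comp (fderiv ℝ Gv p) + (fderiv ℝ F p).flip (Gv p)) p :=
        hFd.hasFDerivAt.clm_apply hGvdiff.hasFDerivAt
      have hclm' : HasFDerivAt (fun z => F z (Gv z))
          ((F p).comp (fderiv ℝ Gv p) + (fderiv ℝ F p).flip (Gv p)) ((fun t : ℝ => p + t • w) 0) := by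
        rw [show (fun t : ℝ => p + t • w) 0 = p by simp]
        exact hclm
      have hcomp : HasDerivAt (fun t : ℝ => F (p + t • w) (Gv (p + t • w)))
          (((F p).comp (fderiv ℝ Gv p) + (fderiv ℝ F p).flip (Gv p)) w) 0 :=
        by have := hclm'.comp_hasDerivAt 0 (line_hasDerivAt p w 0); exact this
      have hval : ((F p).comp (fderiv ℝ Gv p) + (fderiv ℝ F p).flip (Gv p)) w
          = fderiv ℝ F p w w := by
        rw [hD0, hGvp]
        simp [ContinuousLinearMap.flip_apply]
      rw [← hval]
      exact hcomp
    have hR : HasDerivAt (fun t : ℝ => g (p + t • w) * vk (n+1) (p + t • w))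
        (g p * (c * w).im) 0 := by
      have h1 := deriv_along' g p w hgd
      have h2 := deriv_along' (vk (n+1)) p w (vk_diff n p)
      have h3 := h1.mul h2
      simp only [zero_smul, add_zero] at h3
      have hvd : fderiv ℝ (vk (n+1)) p w = (c * w).im := by
        rw [vk_fderiv, hcdef]
      rw [hvkp, hvd] at h3
      simpa [Pi.mul_def] using h3
    have huniq : g p * (c * w).im = fderiv ℝ F p w w :=
      ((hL.congr_of_eventuallyEq hev.symm).unique hR).symm
    have him : (c * w).im = Complex.normSq c := by
      rw [hwdef]
      rw [show c * (Complex.I * (starRingEnd ℂ) c) = Complex.I * (c * (starRingEnd ℂ) c) by ring]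
      rw [Complex.mul_conj]
      simp
    have hpos : 0 < Complex.normSq c := Complex.normSq_pos.2 hcne
    have hineq : fderiv ℝ F p w w ≤ 0 := hess_nonpos hf hp hmax w
    rw [him] at huniq
    nlinarith [huniq, hpos, hineq]
end
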